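/- arXiv:2304.06803 — 2 statements merged into one kernel-verified Lean document; each statement's English description precedes it below -/
import Mathlib

section
/- Let d, n be natural numbers with 1 ≤ n < d, let ε_1, …, ε_n ∈ ℝ^d, and let p : ℝ^d → ℝ be strictly positive everywhere. Then for every M ∈ ℝ there exist μ ∈ ℝ^d and a lower-triangular matrix L ∈ ℝ^{d×d} with strictly positive diagonal entries (hence invertible) such that (1/n) · Σ_{i=1}^n [ log p(μ + L ε_i) − log q_{μ,L}(μ + L ε_i) ] > M, where log q_{μ,L}(z) = −(d/2)·log(2π) − log(det L) − (1/2)·‖L⁻¹(z − μ)‖². In other words, the sample-average-approximation ELBO objective over Gaussian variational parameters θ = (μ, L Lᵀ) is unbounded above whenever the sample size n is smaller than the dimension d. -/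
/-!
Since `n < d`, some nonzero `g` is orthogonal to every sample `ε i`. Let `j` be the last index
with `g j ≠ 0`. The rank-one shear `L = 1 + (t - 1) / g j • e_j gᵀ` is lower triangular with
diagonal `(1, …, 1, t, 1, …, 1)`, so `det L = t`, and it fixes every `ε i`. At `μ = 0` the
samples `μ + L ε i = ε i` do not move, while the `-log q` part of the objective grows like
`log det L = log t`, which is unbounded.
-/

open Matrix

theorem Matrix.exists_mulVec_eq_zero_of_card_lt {m n K : Type*} [Fintype m] [Fintype n]
    [Field K] (A : Matrix m n K) (h : Fintype.card m < Fintype.card n) :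
    ∃ v ≠ 0, A *ᵥ v = 0 := by
  obtain ⟨v, hv, hv0⟩ := (Submodule.ne_bot_iff _).mp
    (LinearMap.ker_ne_bot_of_finrank_lt (f := A.mulVecLin) (by simpa using h))
  exact ⟨v, hv0, hv⟩

theorem exists_ne_zero_forall_gt_eq_zero {ι M : Type*} [LinearOrder ι] [Finite ι] [Zero M]
    {g : ι → M} (hg : g ≠ 0) : ∃ j, g j ≠ 0 ∧ ∀ k, j < k → g k = 0 := by
  have hs : (Function.support g).Finite := Set.toFinite _
  obtain ⟨j, hj, hmax⟩ := hs.exists_maximal (Function.support_nonempty_iff.mpr hg)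
  exact ⟨j, hj, fun k hjk => by_contra fun hk => not_le_of_gt hjk (hmax hk hjk.le)⟩

section RankOneShear

variable {ι R : Type*} [DecidableEq ι] [CommRing R]

theorem Matrix.det_one_add_vecMulVec [Fintype ι] (u v : ι → R) :
    (1 + vecMulVec u v).det = 1 + v ⬝ᵥ u := by
  rw [vecMulVec_eq Unit, det_one_add_replicateCol_mul_replicateRow]

theorem Matrix.one_add_vecMulVec_mulVec_of_dotProduct_eq_zero [Fintype ι] (u : ι → R)
    {v w : ι → R} (h : v ⬝ᵥ w = 0) : (1 + vecMulVec u v) *ᵥ w = w := by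
  rw [add_mulVec, one_mulVec, vecMulVec_mulVec, h]
  simp

theorem Matrix.one_add_vecMulVec_single_apply_of_lt [LinearOrder ι] {j : ι} (s : R) {g : ι → R}
    (hg : ∀ k, j < k → g k = 0) {a b : ι} (hab : a < b) :
    (1 + vecMulVec (Pi.single j s) g) a b = 0 := by
  rw [add_apply, one_apply_ne hab.ne, vecMulVec_apply, zero_add]
  rcases eq_or_ne a j with rfl | ha
  · rw [hg b hab, mul_zero]
  · rw [Pi.single_eq_of_ne ha, zero_mul]

theorem Matrix.one_add_vecMulVec_single_apply_self (j : ι) (s : R) (g : ι → R)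
    (a : ι) : (1 + vecMulVec (Pi.single j s) g) a a = if a = j then 1 + s * g j else 1 := by
  rcases eq_or_ne a j with rfl | ha
  · simp [vecMulVec_apply]
  · simp [vecMulVec_apply, ha]

end RankOneShear

theorem Matrix.exists_lowerTriangular_det_eq_mulVec_eq_of_card_lt {ι m K : Type*} [Fintype ι]
    [DecidableEq ι] [LinearOrder ι] [Fintype m]
    [Field K] [LinearOrder K] [IsStrictOrderedRing K] (v : m → ι → K)
    (hcard : Fintype.card m < Fintype.card ι) {t : K} (ht : 0 < t) :
    ∃ L : Matrix ι ι K, (∀ a b, a < b → L a b = 0) ∧ (∀ a, 0 < L a a) ∧ L.det = t ∧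
      ∀ i, L *ᵥ v i = v i := by
  obtain ⟨g, hg, hgv⟩ := (Matrix.of v).exists_mulVec_eq_zero_of_card_lt hcard
  obtain ⟨j, hgj, hg_gt⟩ := exists_ne_zero_forall_gt_eq_zero hg
  have hjj : 1 + (t - 1) / g j * g j = t := by rw [div_mul_cancel₀ _ hgj]; ring
  refine ⟨1 + vecMulVec (Pi.single j ((t - 1) / g j)) g,
    fun a b => one_add_vecMulVec_single_apply_of_lt _ hg_gt, fun a => ?_, ?_, fun i => ?_⟩
  · rw [one_add_vecMulVec_single_apply_self, hjj]
    split_ifs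
    exacts [ht, one_pos]
  · rw [det_one_add_vecMulVec, dotProduct_single, mul_comm, hjj]
  · refine one_add_vecMulVec_mulVec_of_dotProduct_eq_zero _ ?_
    rw [dotProduct_comm]
    exact congrFun hgv i

theorem Matrix.inv_mulVec_add_mulVec_sub {ι R : Type*} [Fintype ι] [DecidableEq ι] [CommRing R]
    {L : Matrix ι ι R} (hL : IsUnit L.det) (μ e : ι → R) : L⁻¹ *ᵥ ((μ + L *ᵥ e) - μ) = e := by
  rw [add_sub_cancel_left, mulVec_mulVec, nonsing_inv_mul _ hL, one_mulVec]

theorem saa_elbo_unbounded_general (d n : ℕ) (hn : 1 ≤ n) (hnd : n < d)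
    (ε : Fin n → (Fin d → ℝ))
    (p : (Fin d → ℝ) → ℝ) (M : ℝ) :
    ∃ (μ : Fin d → ℝ) (L : Matrix (Fin d) (Fin d) ℝ),
      (∀ j k : Fin d, j < k → L j k = 0) ∧
      (∀ j : Fin d, 0 < L j j) ∧
      (1 / (n : ℝ)) * ∑ i : Fin n,
        (Real.log (p (μ + L.mulVec (ε i))) -
          (-(((d : ℝ) / 2) * Real.log (2 * Real.pi)) - Real.log L.det -
            (1 / 2) * ∑ j : Fin d, ((L⁻¹).mulVec ((μ + L.mulVec (ε i)) - μ)) j ^ 2)) > M := by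
  set C : ℝ := (1 / (n : ℝ)) * ∑ i : Fin n, (Real.log (p (ε i)) +
    (d : ℝ) / 2 * Real.log (2 * Real.pi) + 1 / 2 * ∑ j : Fin d, ε i j ^ 2)
  obtain ⟨L, hlow, hdiag, hdet, hfix⟩ :=
    exists_lowerTriangular_det_eq_mulVec_eq_of_card_lt ε (by simpa using hnd)
      (Real.exp_pos (M - C + 1))
  have hL : IsUnit L.det := hdet ▸ (Real.exp_pos _).ne'.isUnit
  refine ⟨0, L, hlow, hdiag, ?_⟩
  simp only [inv_mulVec_add_mulVec_sub hL]
  simp only [zero_add, hfix, hdet, Real.log_exp]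
  have hn0 : (n : ℝ) ≠ 0 := by positivity
  calc (1 / (n : ℝ)) * ∑ i : Fin n, (Real.log (p (ε i)) -
        (-((d : ℝ) / 2 * Real.log (2 * Real.pi)) - (M - C + 1) - 1 / 2 * ∑ j, ε i j ^ 2))
      = C + (M - C + 1) := by
        simp only [C, sub_sub_eq_add_sub, sub_neg_eq_add, Finset.sum_add_distrib,
          Finset.sum_const, Finset.card_univ, Fintype.card_fin, nsmul_eq_mul]
        field_simp
        ring
    _ > M := by linarith

/-- The SAA ELBO objective over Gaussian variational parameters `θ = (μ, L Lᵀ)` is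
unbounded above whenever the sample size `n` is smaller than the dimension `d`.
Here `log q_{μ,L}(z) = -(d/2)·log(2π) - log(det L) - (1/2)·‖L⁻¹(z-μ)‖²`. -/
theorem saa_elbo_unbounded (d n : ℕ) (hn : 1 ≤ n) (hnd : n < d)
    (ε : Fin n → (Fin d → ℝ))
    (p : (Fin d → ℝ) → ℝ) (hp : ∀ z, 0 < p z) (M : ℝ) :
    ∃ (μ : Fin d → ℝ) (L : Matrix (Fin d) (Fin d) ℝ),
      (∀ j k : Fin d, j < k → L j k = 0) ∧
      (∀ j : Fin d, 0 < L j j) ∧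
      (1 / (n : ℝ)) * ∑ i : Fin n,
        (Real.log (p (μ + L.mulVec (ε i))) -
          (-(((d : ℝ) / 2) * Real.log (2 * Real.pi)) - Real.log L.det -
            (1 / 2) * ∑ j : Fin d, ((L⁻¹).mulVec ((μ + L.mulVec (ε i)) - μ)) j ^ 2)) > M :=
  saa_elbo_unbounded_general d n hn hnd ε p M
end

section
/- Let d, n ∈ ℕ with 1 ≤ n, let ε_1, …, ε_n ∈ ℝ^d, and let p : ℝ^d → ℝ be strictly positive everywhere. Fix an index ℓ ∈ {1, …, d} and a vector v ∈ ℝ^d with v_ℓ = 1, v_j = 0 for all j > ℓ, and ⟨v, ε_i⟩ = 0 for every 1 ≤ i ≤ n. For λ > 0 let L_λ be the d×d real matrix whose (j,k) entry equals λ·v_k if j = ℓ, and equals δ_{jk} if j ≠ ℓ. Then for every λ > 0, (1/n)·Σ_{i=1}^n [ log p(L_λ ε_i) − log q_{0,L_λ}(L_λ ε_i) ] = c + log λ, where c = (1/n)·Σ_{i=1}^n log p(L_1 ε_i) + (d/2)·log(2π) + (1/(2n))·Σ_{i=1}^n ‖ε_i‖² is a constant not depending on λ. -/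
open scoped BigOperators

/-- For `λ > 0`, the SAA ELBO objective at `θ_λ = (0, L_λ L_λᵀ)` equals `c + log λ`,
where `c` does not depend on `λ`. Here `L_λ` is the identity matrix except row `ℓ`,
which is `λ·v`, and `log q_{0,L}(z) = -(d/2)log(2π) - log|det L| - (1/2)‖L⁻¹ z‖²`. -/
theorem saa_elbo_eq_const_add_log (d n : ℕ) (hn : 1 ≤ n)
    (ε : Fin n → (Fin d → ℝ)) (p : (Fin d → ℝ) → ℝ) (hp : ∀ z, 0 < p z)
    (ℓ : Fin d) (v : Fin d → ℝ)
    (hvℓ : v ℓ = 1) (hv : ∀ j : Fin d, ℓ < j → v j = 0)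
    (horth : ∀ i : Fin n, ∑ k : Fin d, v k * ε i k = 0)
    (Lmat : ℝ → Matrix (Fin d) (Fin d) ℝ)
    (hL : ∀ (lam : ℝ) (j k : Fin d),
      Lmat lam j k = if j = ℓ then lam * v k else (if j = k then 1 else 0)) :
    ∀ lam : ℝ, 0 < lam →
      (1 / (n : ℝ)) * ∑ i : Fin n,
          (Real.log (p ((Lmat lam).mulVec (ε i))) -
            (-(((d : ℝ) / 2) * Real.log (2 * Real.pi)) - Real.log |(Lmat lam).det| -
              (1 / 2) * ∑ j : Fin d, (((Lmat lam)⁻¹).mulVec ((Lmat lam).mulVec (ε i))) j ^ 2))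
        = ((1 / (n : ℝ)) * ∑ i : Fin n, Real.log (p ((Lmat 1).mulVec (ε i)))
            + ((d : ℝ) / 2) * Real.log (2 * Real.pi)
            + (1 / (2 * (n : ℝ))) * ∑ i : Fin n, ∑ j : Fin d, ε i j ^ 2)
          + Real.log lam := by
  intro lam hlam
  -- determinant
  have hdet : ∀ mu : ℝ, (Lmat mu).det = mu := by
    intro mu
    have htri : (Lmat mu).BlockTriangular OrderDual.toDual := by
      intro i j hij
      have hij' : i < j := hij
      rw [hL]
      have hi : i ≠ ℓ ∨ i = ℓ := (ne_or_eq i ℓ)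
      rcases eq_or_ne i ℓ with h | h
      · simp [h, hv j (h ▸ hij')]
      · simp [h, hij'.ne]
    rw [Matrix.det_of_lowerTriangular _ htri]
    have : ∀ i : Fin d, Lmat mu i i = if i = ℓ then mu else 1 := by
      intro i
      rw [hL]
      by_cases h : i = ℓ <;> simp [h, hvℓ]
    rw [Finset.prod_congr rfl fun i _ => this i]
    simp [Finset.prod_ite_eq']
  -- mulVec
  have hmv : ∀ (mu : ℝ) (i : Fin n),
      (Lmat mu).mulVec (ε i) = fun j => if j = ℓ then 0 else ε i j := by
    intro mu i
    funext j
    simp only [Matrix.mulVec, dotProduct]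
    by_cases h : j = ℓ
    · subst h
      simp only [if_pos rfl]
      calc (∑ k : Fin d, Lmat mu j k * ε i k) = mu * ∑ k : Fin d, v k * ε i k := by
            rw [Finset.mul_sum]
            exact Finset.sum_congr rfl fun k _ => by
              rw [hL]; simp only [if_pos rfl, if_true]; ring
        _ = 0 := by rw [horth i, mul_zero]
    · simp only [if_neg h]
      calc (∑ k : Fin d, Lmat mu j k * ε i k)
            = ∑ k : Fin d, (if j = k then 1 else 0) * ε i k :=
            Finset.sum_congr rfl fun k _ => by rw [hL, if_neg h]
        _ = ε i j := by simp
  -- inverse cancels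
  have hinv : ∀ i : Fin n,
      ((Lmat lam)⁻¹).mulVec ((Lmat lam).mulVec (ε i)) = ε i := by
    intro i
    have hu : IsUnit (Lmat lam).det := by
      rw [hdet]; exact isUnit_iff_ne_zero.mpr hlam.ne'
    rw [Matrix.mulVec_mulVec, Matrix.nonsing_inv_mul _ hu, Matrix.one_mulVec]
  have hlog : Real.log |(Lmat lam).det| = Real.log lam := by
    rw [hdet, abs_of_pos hlam]
  have hn' : (n : ℝ) ≠ 0 := Nat.cast_ne_zero.mpr (by omega)
  have hterm : ∀ i : Fin n,
      (Real.log (p ((Lmat lam).mulVec (ε i))) -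
        (-(((d : ℝ) / 2) * Real.log (2 * Real.pi)) - Real.log |(Lmat lam).det| -
          (1 / 2) * ∑ j : Fin d, (((Lmat lam)⁻¹).mulVec ((Lmat lam).mulVec (ε i))) j ^ 2))
      = Real.log (p ((Lmat 1).mulVec (ε i))) + ((d : ℝ) / 2) * Real.log (2 * Real.pi)
          + (1 / 2) * ∑ j : Fin d, ε i j ^ 2 + Real.log lam := by
    intro i
    rw [hinv i, hlog, hmv lam i, ← hmv 1 i]
    ring
  rw [Finset.sum_congr rfl fun i _ => hterm i]
  simp only [Finset.sum_add_distrib, Finset.sum_const, Finset.card_univ, Fintype.card_fin,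
    nsmul_eq_mul]
  rw [← Finset.mul_sum]
  field_simp
end
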